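/- Axiom (5) is valid in 𝓜(S5m): for all a ∈ V, x ∈ □̃₃ a, y ∈ □̃₃ x, and w ∈ x →̃ y, we have w ∈ D = {T, t}. (This encodes validity of □φ → □□φ.) -/

import Mathlib

inductive MV | T | t | f | F
deriving DecidableEq

open MV

def D : Set MV := {T, t}

def mneg : MV → MV
  | T => F | t => f | f => t | F => T

def mimp : MV → MV → Set MV
  | T, b => {b}
  | t, T => {T} | t, t => {T, t} | t, f => {f} | t, F => {f}
  | f, T => {T} | f, t => {T, t} | f, f => {T, t} | f, F => {t}
  | F, _ => {T}

def box1 : MV → Set MV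
  | T => {T, t} | _ => {f, F}

def box2 : MV → Set MV
  | T => {T} | _ => {f, F}

def box3 : MV → Set MV
  | T => {T} | _ => {F}

theorem eq_T_or_eq_F_of_mem_box3 {a x : MV} (h : x ∈ box3 a) : x = T ∨ x = F := by
  cases a
  · exact Or.inl h
  all_goals exact Or.inr h

-- `box3` returns only `T` or `F`, so the implication is `T →̃ T` or `F →̃ _`, both `{T}`.
theorem eq_T_of_mem_mimp_of_mem_box3 {a x y w : MV} (hx : x ∈ box3 a) (hy : y ∈ box3 x)
    (hw : w ∈ mimp x y) : w = T := by
  rcases eq_T_or_eq_F_of_mem_box3 hx with rfl | rfl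
  · obtain rfl : y = T := hy
    exact hw
  · exact hw

theorem ax5_valid :
    ∀ a x y w : MV, x ∈ box3 a → y ∈ box3 x → w ∈ mimp x y → w ∈ D := by
  intro a x y w hx hy hw
  rw [eq_T_of_mem_mimp_of_mem_box3 hx hy hw]
  exact Or.inl rfl
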